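/- arXiv:1204.5929 — 3 statements merged into one kernel-verified Lean document; each statement's English description precedes it below -/
import Mathlib

section
/- Every rooted binary tree Y with n ≥ 1 vertices can be transformed into the complete left chain on n vertices (the tree in which all n vertices are linked by left-child pointers) by a sequence of exactly L_Y − 1 direct chain rotations, where L_Y is the number of maximal left chains of Y. -/
/-- Rooted binary trees with vertices labeled by `α`: each vertex has an optional
left child and an optional right child; `nil` denotes the absent (empty) tree. -/
inductive BT (α : Type) : Type
  | nil : BT α
  | node : BT α → α → BT α → BT α

namespace BT

variable {α : Type}

/-- The number of vertices of a tree. -/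
def size : BT α → ℕ
  | nil => 0
  | node l _ r => size l + size r + 1

/-- The in-order (infix) traversal sequence of the labels of a tree:
left subtree first, then the root, then the right subtree. -/
def inorder : BT α → List α
  | nil => []
  | node l x r => inorder l ++ x :: inorder r

/-- The number of vertices of the tree having a (non-null) right child. -/
def rightChildCount : BT α → ℕ
  | nil => 0
  | node l _ nil => rightChildCount l
  | node l _ (node rl y rr) => rightChildCount l + rightChildCount (node rl y rr) + 1

/-- The number of vertices of the tree having a (non-null) left child. -/
def leftChildCount : BT α → ℕ
  | nil => 0
  | node nil _ r => leftChildCount r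
  | node (node ll y lr) _ r => leftChildCount (node ll y lr) + leftChildCount r + 1

/-- `L T`: the number of maximal left chains of `T`.  A left chain is a sequence of
vertices each linked to the next by a left-child pointer (a single vertex is a chain);
a maximal left chain is one not contained in any other left chain.  Each maximal left
chain is uniquely determined by its topmost vertex, which is either the root of the
tree or a right child of some vertex; moreover the maximal left chain headed by the
root of a nonempty left subtree `l` merges with its parent, which yields the
recursion below. -/
def L : BT α → ℕ
  | nil => 0
  | node nil _ r => 1 + L r
  | node (node ll y lr) _ r => L (node ll y lr) + L r

/-- `R T`: the number of maximal right chains of `T` (mirror image of `L`). -/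
def R : BT α → ℕ
  | nil => 0
  | node l _ nil => R l + 1
  | node l _ (node rl y rr) => R l + R (node rl y rr)

/-- The complete left chain on `n` vertices: the tree in which all `n` vertices are
linked by left-child pointers. -/
def leftChain : ℕ → BT Unit
  | 0 => nil
  | n + 1 => node (leftChain n) () nil

/-- The complete right chain on `n` vertices: the tree in which all `n` vertices are
linked by right-child pointers. -/
def rightChain : ℕ → BT Unit
  | 0 => nil
  | n + 1 => node nil () (rightChain n)

/-- `SpliceL A w U V lv` captures the local effect of the direct chain rotation
`rot([u-v], w)` for a **left** chain `[u-v]`: here `U` is the subtree rooted at `u`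
(`u` being the right child of `w`), `A` is the left subtree of `w` and `w` is its
label, `[u-v]` is the left chain going from `u` down (along left-child pointers) to
`v` inside `U`, `lv` is the former left subtree of `v`, and `V` is the tree replacing
the subtree `node A w U` rooted at `w`: the vertex `u` takes the place of `w`, `w`
becomes the left child of `v`, and the former left subtree `lv` of `v` (if any)
becomes the right subtree of `w`.  The chain `[u-v]` is maximal iff `lv = nil`. -/
inductive SpliceL (A : BT α) (w : α) : BT α → BT α → BT α → Prop
  | base (lv rv : BT α) (v : α) :
      SpliceL A w (node lv v rv) (node (node A w lv) v rv) lv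
  | step {lu lu' lv : BT α} (c : α) (ru : BT α) :
      SpliceL A w lu lu' lv → SpliceL A w (node lu c ru) (node lu' c ru) lv

/-- `SpliceR A w U V rv`: mirror image of `SpliceL`, i.e. the local effect of the
direct chain rotation `rot([u-v], w)` for a **right** chain `[u-v]`: `U` is the
subtree rooted at `u` (`u` being the left child of `w`), `A` is the right subtree of
`w`, `[u-v]` is the right chain from `u` down to `v` inside `U`, `rv` is the former
right subtree of `v`, and `V` replaces the subtree `node U w A` rooted at `w`: `u`
takes the place of `w`, `w` becomes the right child of `v`, and the former right
subtree `rv` of `v` (if any) becomes the left subtree of `w`.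
The chain `[u-v]` is maximal iff `rv = nil`. -/
inductive SpliceR (A : BT α) (w : α) : BT α → BT α → BT α → Prop
  | base (lv rv : BT α) (v : α) :
      SpliceR A w (node lv v rv) (node lv v (node rv w A)) rv
  | step {ru ru' rv : BT α} (lu : BT α) (c : α) :
      SpliceR A w ru ru' rv → SpliceR A w (node lu c ru) (node lu c ru') rv

/-- `Ctx Y Y' W W'`: the tree `Y'` is obtained from `Y` by replacing one occurrence
of the subtree `W`, rooted at some vertex of `Y` (or `Y` itself), by the tree `W'`. -/
inductive Ctx : BT α → BT α → BT α → BT α → Prop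
  | refl (W W' : BT α) : Ctx W W' W W'
  | left {l l' W W' : BT α} (x : α) (r : BT α) :
      Ctx l l' W W' → Ctx (node l x r) (node l' x r) W W'
  | right {r r' W W' : BT α} (l : BT α) (x : α) :
      Ctx r r' W W' → Ctx (node l x r) (node l x r') W W'

/-- `Y'` is obtained from `Y` by one **direct** chain rotation `rot([u-v], w)`,
performed either on a left chain or (symmetrically) on a right chain, at an arbitrary
vertex `w` of `Y`. -/
def DirectRot (Y Y' : BT α) : Prop :=
  (∃ A w U V lv, SpliceL A w U V lv ∧ Ctx Y Y' (node A w U) V) ∨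
  (∃ A w U V rv, SpliceR A w U V rv ∧ Ctx Y Y' (node U w A) V)

/-- `IChainL A w B X X'` captures the data of the inverse chain rotation
`rot(w, [u-v])` for a **left** chain `[u-v]`: `X` is the subtree rooted at `u`,
`[u-v]` is the left chain from `u` down to `v` inside `X`, and the vertex `w` (with
label `w`, left subtree `A` and right subtree `B`) is the left child of `v`; `X'` is
`X` with the left child `w` of `v` replaced by `B` (the former right subtree of `w`
becomes the left subtree of `v`).  The rotation replaces the subtree `X` by
`node A w X'`: `w` takes the place of `u` and `u` becomes the right child of `w`. -/
inductive IChainL (A : BT α) (w : α) (B : BT α) : BT α → BT α → Prop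
  | base (v : α) (rv : BT α) :
      IChainL A w B (node (node A w B) v rv) (node B v rv)
  | step {lu lu' : BT α} (c : α) (ru : BT α) :
      IChainL A w B lu lu' → IChainL A w B (node lu c ru) (node lu' c ru)

/-- `IChainR B w A X X'`: mirror image of `IChainL`, for the inverse chain rotation
`rot(w, [u-v])` on a **right** chain `[u-v]`: `X` is the subtree rooted at `u`, the
vertex `w` (with left subtree `B` and right subtree `A`) is the right child of `v`;
`X'` is `X` with the right child `w` of `v` replaced by `B`.  The rotation replaces
`X` by `node X' w A`: `w` takes the place of `u` and `u` becomes the left child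
of `w`. -/
inductive IChainR (B : BT α) (w : α) (A : BT α) : BT α → BT α → Prop
  | base (v : α) (lv : BT α) :
      IChainR B w A (node lv v (node B w A)) (node lv v B)
  | step {ru ru' : BT α} (lu : BT α) (c : α) :
      IChainR B w A ru ru' → IChainR B w A (node lu c ru) (node lu c ru')

/-- `Y'` is obtained from `Y` by one **inverse** chain rotation `rot(w, [u-v])`,
performed either on a left chain or (symmetrically) on a right chain, anywhere
in `Y`. -/
def InvRot (Y Y' : BT α) : Prop :=
  (∃ A w B X X', IChainL A w B X X' ∧ Ctx Y Y' X (node A w X')) ∨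
  (∃ B w A X X', IChainR B w A X X' ∧ Ctx Y Y' X (node X' w A))

/-- One chain rotation (c-rotation), direct or inverse. -/
def CStep (Y Y' : BT α) : Prop := DirectRot Y Y' ∨ InvRot Y Y'

/-- `ReachIn k S T`: `S` can be transformed into `T` by a sequence of exactly `k`
chain rotations (each direct or inverse). -/
def ReachIn : ℕ → BT α → BT α → Prop
  | 0 => fun S T => S = T
  | k + 1 => fun S T => ∃ Y, CStep S Y ∧ ReachIn k Y T

/-- `DReachIn k S T`: `S` can be transformed into `T` by a sequence of exactly `k`
**direct** chain rotations. -/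
def DReachIn : ℕ → BT α → BT α → Prop
  | 0 => fun S T => S = T
  | k + 1 => fun S T => ∃ Y, DirectRot S Y ∧ DReachIn k Y T

/-- The chain distance `C(S,T)`: the minimum number of chain rotations (direct or
inverse) needed to transform `S` into `T`. -/
noncomputable def chainDist (S T : BT α) : ℕ := sInf {k | ReachIn k S T}

lemma L_pos {Y : BT α} (h : Y ≠ nil) : 1 ≤ L Y := by
  induction Y with
  | nil => exact absurd rfl h
  | node l x r ihl ihr =>
    cases l with
    | nil => simp [L]
    | node ll y lr =>
      have := ihl (by simp)
      simp only [L]; omega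

lemma size_pos {Y : BT α} (h : Y ≠ nil) : 1 ≤ size Y := by
  cases Y with
  | nil => exact absurd rfl h
  | node l x r => simp only [size]; omega

lemma ne_nil_of_size {Y : BT α} (h : 1 ≤ size Y) : Y ≠ nil := by
  cases Y with
  | nil => simp [size] at h
  | node l x r => simp

lemma L_node_ne {l : BT α} (h : l ≠ nil) (x : α) (r : BT α) :
    L (node l x r) = L l + L r := by
  cases l with
  | nil => exact absurd rfl h
  | node ll y lr => simp [L]

lemma L_eq_one {Y : BT Unit} (h : L Y = 1) : Y = leftChain Y.size := by
  induction Y with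
  | nil => simp [L] at h
  | node l x r ihl ihr =>
    have hr : r = nil := by
      by_contra hr
      have h1 : 1 ≤ L r := L_pos hr
      cases l with
      | nil => simp [L] at h; omega
      | node ll y lr =>
        have := L_pos (Y := node ll y lr) (by simp)
        simp [L] at h; omega
    subst hr
    cases x
    cases l with
    | nil => simp [size, leftChain]
    | node ll y lr =>
      simp [L] at h
      have hsz : (node (node ll y lr) () nil).size = (node ll y lr).size + 1 := by
        simp [size]
      rw [hsz]
      show _ = node (leftChain (node ll y lr).size) () nil
      exact congrArg (fun t => node t () nil) (ihl h)

lemma spliceL_exists (A : BT α) (w : α) {U : BT α} (h : U ≠ nil) :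
    ∃ V, SpliceL A w U V nil := by
  induction U with
  | nil => exact absurd rfl h
  | node lu c ru ihl ihr =>
    cases lu with
    | nil => exact ⟨_, SpliceL.base nil ru c⟩
    | node ll y lr =>
      obtain ⟨V, hV⟩ := ihl (by simp)
      exact ⟨_, SpliceL.step c ru hV⟩

lemma spliceL_size {A : BT α} {w : α} {U V lv : BT α} (h : SpliceL A w U V lv) :
    V.size = A.size + U.size + 1 := by
  induction h with
  | base lv rv v => simp [size]; omega
  | step c ru _ ih => simp [size]; omega

lemma spliceL_shape {A : BT α} {w : α} {U V lv : BT α} (h : SpliceL A w U V lv) :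
    U ≠ nil ∧ V ≠ nil := by
  cases h <;> simp

lemma spliceL_L {A : BT α} {w : α} {U V lv : BT α} (h : SpliceL A w U V lv)
    (hlv : lv = nil) : V.L + 1 = (node A w U).L := by
  induction h with
  | base lv rv v =>
    subst hlv
    cases A <;> simp [L] <;> omega
  | step c ru hs ih =>
    obtain ⟨h1, h2⟩ := spliceL_shape hs
    have ih' := ih hlv
    cases A with
    | nil =>
      simp only [L, L_node_ne h1, L_node_ne h2] at *
      omega
    | node al a ar =>
      simp only [L, L_node_ne h1, L_node_ne h2] at *
      omega

lemma directRot_left {l l' : BT α} (x : α) (r : BT α) (h : DirectRot l l') :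
    DirectRot (node l x r) (node l' x r) := by
  rcases h with ⟨A, w, U, V, lv, hs, hc⟩ | ⟨A, w, U, V, rv, hs, hc⟩
  · exact Or.inl ⟨A, w, U, V, lv, hs, Ctx.left x r hc⟩
  · exact Or.inr ⟨A, w, U, V, rv, hs, Ctx.left x r hc⟩

lemma step_exists {Y : BT α} (h2 : 2 ≤ L Y) :
    ∃ Y', DirectRot Y Y' ∧ size Y' = size Y ∧ L Y' + 1 = L Y := by
  induction Y with
  | nil => simp [L] at h2
  | node l x r ihl ihr =>
    by_cases hr : r = nil
    · subst hr
      cases l with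
      | nil => simp [L] at h2
      | node ll y lr =>
        have hl : (node ll y lr : BT α) ≠ nil := by simp
        rw [L_node_ne hl] at h2
        simp [L] at h2
        obtain ⟨l', hd, hsz, hL⟩ := ihl h2
        have hl' : l' ≠ nil := ne_nil_of_size (by rw [hsz]; exact size_pos hl)
        refine ⟨node l' x nil, directRot_left x nil hd, ?_, ?_⟩
        · simp [size, hsz]
        · rw [L_node_ne hl, L_node_ne hl']
          simp [L]; omega
    · obtain ⟨V, hV⟩ := spliceL_exists l x hr
      refine ⟨V, Or.inl ⟨l, x, r, V, nil, hV, Ctx.refl _ _⟩, ?_, spliceL_L hV rfl⟩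
      rw [spliceL_size hV]; simp [size]

theorem to_chain_aux : ∀ (m : ℕ) (Y : BT Unit), L Y = m → 1 ≤ Y.size →
    DReachIn (m - 1) Y (leftChain Y.size) := by
  intro m
  induction m using Nat.strong_induction_on with
  | _ m ih =>
    intro Y hm hs
    have hY : Y ≠ nil := ne_nil_of_size hs
    have h1 : 1 ≤ m := hm ▸ L_pos hY
    rcases eq_or_lt_of_le h1 with h1 | h1
    · have : Y = leftChain Y.size := L_eq_one (hm ▸ h1.symm)
      rw [show m - 1 = 0 by omega]
      exact this
    · obtain ⟨Y', hd, hsz, hL⟩ := step_exists (Y := Y) (by omega)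
      rw [show m - 1 = (m - 1 - 1) + 1 by omega]
      refine ⟨Y', hd, ?_⟩
      have := ih (m - 1) (by omega) Y' (by omega) (by rw [hsz]; exact hs)
      rwa [hsz] at this

end BT

open BT

/-- every rooted binary tree `Y` with `n ≥ 1` vertices can be transformed
into the complete left chain on `n` vertices by a sequence of exactly `L_Y − 1`
direct chain rotations. -/
theorem to_complete_left_chain (Y : BT Unit) (n : ℕ) (hn : 1 ≤ n) (hY : Y.size = n) :
    DReachIn (Y.L - 1) Y (leftChain n) := by
  subst hY
  exact to_chain_aux Y.L Y rfl hn
end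

section
/- If a rooted binary tree Y' is obtained from a rooted binary tree Y by the direct chain rotation rot([u-v], w) where [u-v] is a maximal left chain of Y, then L_{Y'} = L_Y − 1 and R_{Y'} = R_Y + 1; symmetrically, if [u-v] is a maximal right chain of Y, then L_{Y'} = L_Y + 1 and R_{Y'} = R_Y − 1. Here L_Y and R_Y denote the numbers of maximal left chains and maximal right chains of Y. -/
open BT

section Aux

attribute [local instance] Classical.propDecidable

variable {α : Type}

lemma L_node (l : BT α) (x : α) (r : BT α) :
    L (node l x r) = (if l = nil then 1 else L l) + L r := by
  cases l <;> simp [L]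

lemma R_node (l : BT α) (x : α) (r : BT α) :
    R (node l x r) = R l + (if r = nil then 1 else R r) := by
  cases r <;> simp [R]

lemma spliceL_ne_nil {A : BT α} {w : α} {U V lv : BT α} (h : SpliceL A w U V lv) :
    U ≠ nil ∧ V ≠ nil := by
  cases h <;> exact ⟨by simp, by simp⟩

lemma spliceR_ne_nil {A : BT α} {w : α} {U V rv : BT α} (h : SpliceR A w U V rv) :
    U ≠ nil ∧ V ≠ nil := by
  cases h <;> exact ⟨by simp, by simp⟩

lemma ctx_ne_nil {Y Y' W W' : BT α} (h : Ctx Y Y' W W') (hW : W ≠ nil) (hW' : W' ≠ nil) :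
    Y ≠ nil ∧ Y' ≠ nil := by
  cases h
  · exact ⟨hW, hW'⟩
  · exact ⟨by simp, by simp⟩
  · exact ⟨by simp, by simp⟩

lemma ctx_L {Y Y' W W' : BT α} (h : Ctx Y Y' W W') (hW : W ≠ nil) (hW' : W' ≠ nil) :
    (L Y' : ℤ) - L Y = (L W' : ℤ) - L W := by
  induction h with
  | refl => ring
  | left x r h ih =>
    obtain ⟨hl, hl'⟩ := ctx_ne_nil h hW hW'
    rw [L_node, L_node, if_neg hl, if_neg hl']
    push_cast
    linarith [ih hW hW']
  | right l x h ih =>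
    rw [L_node, L_node]
    push_cast
    linarith [ih hW hW']

lemma ctx_R {Y Y' W W' : BT α} (h : Ctx Y Y' W W') (hW : W ≠ nil) (hW' : W' ≠ nil) :
    (R Y' : ℤ) - R Y = (R W' : ℤ) - R W := by
  induction h with
  | refl => ring
  | left x r h ih =>
    rw [R_node, R_node]
    push_cast
    linarith [ih hW hW']
  | right l x h ih =>
    obtain ⟨hr, hr'⟩ := ctx_ne_nil h hW hW'
    rw [R_node, R_node, if_neg hr, if_neg hr']
    push_cast
    linarith [ih hW hW']

lemma spliceL_counts {A : BT α} {w : α} {U V : BT α} (h : SpliceL A w U V nil) :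
    (L V : ℤ) = L (node A w U) - 1 ∧ (R V : ℤ) = R (node A w U) + 1 := by
  generalize hlv : (nil : BT α) = lv at h
  induction h with
  | base lv' rv v =>
    subst hlv
    refine ⟨?_, ?_⟩ <;>
      (simp [L_node, R_node, show (nil : BT α).L = 0 from rfl, show (nil : BT α).R = 0 from rfl];
       split_ifs <;> push_cast <;> ring)
  | step c ru h ih =>
    obtain ⟨hL, hR⟩ := ih hlv
    obtain ⟨hu, hu'⟩ := spliceL_ne_nil h
    refine ⟨?_, ?_⟩
    · simp only [L_node, if_neg hu, if_neg hu'] at hL ⊢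
      push_cast at hL ⊢
      linarith
    · simp only [R_node, if_neg hu, if_neg hu'] at hR ⊢
      push_cast at hR ⊢
      linarith

lemma spliceR_counts {A : BT α} {w : α} {U V : BT α} (h : SpliceR A w U V nil) :
    (L V : ℤ) = L (node U w A) + 1 ∧ (R V : ℤ) = R (node U w A) - 1 := by
  generalize hrv : (nil : BT α) = rv at h
  induction h with
  | base lv rv' v =>
    subst hrv
    refine ⟨?_, ?_⟩ <;>
      (simp [L_node, R_node, show (nil : BT α).L = 0 from rfl, show (nil : BT α).R = 0 from rfl];
       split_ifs <;> push_cast <;> ring)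
  | step lu c h ih =>
    obtain ⟨hL, hR⟩ := ih hrv
    obtain ⟨hu, hu'⟩ := spliceR_ne_nil h
    refine ⟨?_, ?_⟩
    · simp only [L_node, if_neg hu, if_neg hu'] at hL ⊢
      push_cast at hL ⊢
      linarith
    · simp only [R_node, if_neg hu, if_neg hu'] at hR ⊢
      push_cast at hR ⊢
      linarith

end Aux

/-- if `Y'` is obtained from `Y` by the direct chain rotation
`rot([u-v], w)` where `[u-v]` is a **maximal** left chain of `Y` (i.e. the former
left subtree of `v` is empty, `u` being a right child), then `L_{Y'} = L_Y − 1` and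
`R_{Y'} = R_Y + 1`; symmetrically, if `[u-v]` is a maximal right chain of `Y`, then
`L_{Y'} = L_Y + 1` and `R_{Y'} = R_Y − 1`. -/
theorem directRot_maximal_chain_counts (Y Y' : BT Unit) :
    (∀ (A : BT Unit) (w : Unit) (U V : BT Unit),
      SpliceL A w U V BT.nil → Ctx Y Y' (BT.node A w U) V →
        (Y'.L : ℤ) = (Y.L : ℤ) - 1 ∧ (Y'.R : ℤ) = (Y.R : ℤ) + 1) ∧
    (∀ (A : BT Unit) (w : Unit) (U V : BT Unit),
      SpliceR A w U V BT.nil → Ctx Y Y' (BT.node U w A) V →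
        (Y'.L : ℤ) = (Y.L : ℤ) + 1 ∧ (Y'.R : ℤ) = (Y.R : ℤ) - 1) := by
  constructor
  · intro A w U V hs hc
    have hW : (node A w U : BT Unit) ≠ nil := by simp
    have hW' := (spliceL_ne_nil hs).2
    obtain ⟨hL, hR⟩ := spliceL_counts hs
    have h1 := ctx_L hc hW hW'
    have h2 := ctx_R hc hW hW'
    constructor <;> linarith
  · intro A w U V hs hc
    have hW : (node U w A : BT Unit) ≠ nil := by simp
    have hW' := (spliceR_ne_nil hs).2
    obtain ⟨hL, hR⟩ := spliceR_counts hs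
    have h1 := ctx_L hc hW hW'
    have h2 := ctx_R hc hW hW'
    constructor <;> linarith
end

section
/- If a rooted binary tree Y' is obtained from a rooted binary tree Y by the direct chain rotation rot([u-v], w) where [u-v] is a left (or right) chain of Y that is not maximal, then L_{Y'} = L_Y and R_{Y'} = R_Y, where L_Y and R_Y denote the numbers of maximal left chains and maximal right chains of Y. -/
open BT

/-!
Writing `L (node l x r) = max (L l) 1 + L r` and `R (node l x r) = R l + max (R r) 1`,
both counts of a tree are computed from those of its subtrees, so it suffices to show
that the rotated subtree has the same counts. The only difference a rotation at a
non-maximal chain makes is that the nonempty former left subtree `lv` of `v` (the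
former right subtree `rv` in the mirror case) changes sides, which leaves
`max (L lv) 1 = L lv` and `max (R lv) 1 = R lv` unchanged.
-/

namespace BT

variable {α : Type}

lemma L_pos_s11 {T : BT α} (hT : T ≠ nil) : 0 < L T := by
  induction T with
  | nil => exact absurd rfl hT
  | node l x r ihl _ =>
    cases l with
    | nil => simp [L]
    | node ll y lr => exact Nat.add_pos_left (ihl (by simp)) _

lemma R_pos {T : BT α} (hT : T ≠ nil) : 0 < R T := by
  induction T with
  | nil => exact absurd rfl hT
  | node l x r _ ihr =>
    cases r with
    | nil => simp [R]
    | node rl y rr => exact Nat.add_pos_right _ (ihr (by simp))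

lemma L_node (l : BT α) (x : α) (r : BT α) : L (node l x r) = max (L l) 1 + L r := by
  cases l with
  | nil => simp [L, Nat.add_comm]
  | node ll y lr => rw [max_eq_left (L_pos_s11 (by simp))]; rfl

lemma R_node (l : BT α) (x : α) (r : BT α) : R (node l x r) = R l + max (R r) 1 := by
  cases r with
  | nil => simp [R]
  | node rl y rr => rw [max_eq_left (R_pos (by simp))]; rfl

lemma Ctx.apply_eq_apply {β : Type} {f : BT α → β} {g : β → α → β → β}
    (hf : ∀ l x r, f (node l x r) = g (f l) x (f r)) {Y Y' W W' : BT α}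
    (h : Ctx Y Y' W W') (hW : f W' = f W) : f Y' = f Y := by
  induction h with
  | refl => exact hW
  | left x r _ ih => rw [hf, hf, ih hW]
  | right l x _ ih => rw [hf, hf, ih hW]

lemma SpliceL.source_ne_nil {A : BT α} {w : α} {U V lv : BT α}
    (h : SpliceL A w U V lv) : U ≠ nil := by
  cases h <;> simp

lemma SpliceR.source_ne_nil {A : BT α} {w : α} {U V rv : BT α}
    (h : SpliceR A w U V rv) : U ≠ nil := by
  cases h <;> simp

lemma SpliceL.counts_eq {A : BT α} {w : α} {U V lv : BT α} (hlv : lv ≠ nil)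
    (h : SpliceL A w U V lv) : L V = L (node A w U) ∧ R V = R (node A w U) := by
  induction h with
  | base lv rv v =>
    have hL := L_pos_s11 hlv
    have hR := R_pos hlv
    simp only [L_node, R_node]
    omega
  | step c ru hsub ih =>
    obtain ⟨ihL, ihR⟩ := ih hlv
    have hL := L_pos_s11 hsub.source_ne_nil
    have hR := R_pos hsub.source_ne_nil
    simp only [L_node, R_node] at ihL ihR ⊢
    omega

lemma SpliceR.counts_eq {A : BT α} {w : α} {U V rv : BT α} (hrv : rv ≠ nil)
    (h : SpliceR A w U V rv) : L V = L (node U w A) ∧ R V = R (node U w A) := by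
  induction h with
  | base lv rv v =>
    have hL := L_pos_s11 hrv
    have hR := R_pos hrv
    simp only [L_node, R_node]
    omega
  | step lu c hsub ih =>
    obtain ⟨ihL, ihR⟩ := ih hrv
    have hL := L_pos_s11 hsub.source_ne_nil
    have hR := R_pos hsub.source_ne_nil
    simp only [L_node, R_node] at ihL ihR ⊢
    omega

lemma Ctx.counts_eq {Y Y' W W' : BT α} (h : Ctx Y Y' W W')
    (hW : L W' = L W ∧ R W' = R W) : L Y' = L Y ∧ R Y' = R Y :=
  ⟨h.apply_eq_apply (g := fun a _ b => max a 1 + b) L_node hW.1,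
    h.apply_eq_apply (g := fun a _ b => a + max b 1) R_node hW.2⟩

end BT

/-- if `Y'` is obtained from `Y` by the direct chain rotation
`rot([u-v], w)` where `[u-v]` is a left (or right) chain of `Y` that is **not**
maximal (i.e. the former left — respectively right — subtree of `v` is nonempty),
then `L_{Y'} = L_Y` and `R_{Y'} = R_Y`. -/
theorem directRot_nonmaximal_chain_counts (Y Y' : BT Unit) :
    (∀ (A : BT Unit) (w : Unit) (U V lv : BT Unit), lv ≠ BT.nil →
      SpliceL A w U V lv → Ctx Y Y' (BT.node A w U) V →
        Y'.L = Y.L ∧ Y'.R = Y.R) ∧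
    (∀ (A : BT Unit) (w : Unit) (U V rv : BT Unit), rv ≠ BT.nil →
      SpliceR A w U V rv → Ctx Y Y' (BT.node U w A) V →
        Y'.L = Y.L ∧ Y'.R = Y.R) :=
  ⟨fun _ _ _ _ _ hlv hsplice hctx => hctx.counts_eq (hsplice.counts_eq hlv),
    fun _ _ _ _ _ hrv hsplice hctx => hctx.counts_eq (hsplice.counts_eq hrv)⟩
end
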